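/- arXiv:2304.10092 — 4 statements merged into one kernel-verified Lean document; each statement's English description precedes it below -/
import Mathlib

section
/- Let $y_1, \dots, y_k \in \mathbb{R}^r$, $d \in \mathbb{R}^k_{\geq 0}$, and let $R \in \mathbb{R}^{k \times r}$ be the matrix with rows $y_i^\top$. Define $\mathcal{B}_{R,d} := \{x \in \mathbb{R}^r : \|x - y_i\|^2 = d_i^2 \text{ for all } i \in [k]\}$. Suppose the $k \times (r+1)$ matrix $[e, R]$ (where $e$ is the all-ones vector) has rank $k$, and suppose there exists $x \in \mathcal{B}_{R,d}$ at which the gradients $\{2(x - y_i)\}_{i \in [k]}$ are linearly dependent (i.e., LICQ fails at $x$). Then $\mathcal{B}_{R,d} = \{x\}$. -/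
theorem euc_sum_apply {k r : ℕ} (v : Fin k → EuclideanSpace ℝ (Fin r)) (j : Fin r) :
    (∑ i, v i) j = ∑ i, v i j := by
  classical
  induction (Finset.univ : Finset (Fin k)) using Finset.induction with
  | empty => simp [PiLp.zero_apply]
  | @insert a s h ih => rw [Finset.sum_insert h, Finset.sum_insert h, PiLp.add_apply, ih]


theorem stmt_1 {k r : ℕ} (y : Fin k → EuclideanSpace ℝ (Fin r)) (d : Fin k → ℝ)
    (hd : ∀ i, 0 ≤ d i)
    (M : Matrix (Fin k) (Fin (r + 1)) ℝ)
    (hM : M = Matrix.of fun i j => Fin.cons (1 : ℝ) (fun j' => y i j') j)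
    (hrank : M.rank = k)
    (x : EuclideanSpace ℝ (Fin r))
    (hx : ∀ i, ‖x - y i‖ ^ 2 = d i ^ 2)
    (lam : Fin k → ℝ) (hlam : lam ≠ 0)
    (hdep : ∑ i, lam i • (x - y i) = 0) :
    {z : EuclideanSpace ℝ (Fin r) | ∀ i, ‖z - y i‖ ^ 2 = d i ^ 2} = {x} := by
  -- ∑ λᵢ • yᵢ = (∑ λᵢ) • x
  have hy : ∑ i, lam i • (y i) = (∑ i, lam i) • x := by
    have : ∑ i, lam i • (x - y i) = (∑ i, lam i) • x - ∑ i, lam i • y i := by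
      rw [Finset.sum_smul]
      rw [← Finset.sum_sub_distrib]
      congr 1; funext i; rw [smul_sub]
    rw [this] at hdep
    exact (sub_eq_zero.mp hdep).symm
  -- rows of M are linearly independent: vecMul injective
  have hinj : Function.Injective M.transpose.mulVecLin := by
    rw [← LinearMap.ker_eq_bot]
    rw [← Submodule.finrank_eq_zero]
    have h1 := LinearMap.finrank_range_add_finrank_ker M.transpose.mulVecLin
    have h2 : M.transpose.rank = k := by rw [Matrix.rank_transpose]; exact hrank
    unfold Matrix.rank at h2
    simp [Module.finrank_pi] at h1
    omega
  have hs : (∑ i, lam i) ≠ 0 := by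
    intro hsum
    apply hlam
    have hMv : M.transpose.mulVecLin lam = 0 := by
      funext j
      simp only [Matrix.mulVecLin_apply, Matrix.mulVec, dotProduct,
        Matrix.transpose_apply, hM, Matrix.of_apply, Pi.zero_apply]
      refine Fin.cases ?_ ?_ j
      · simpa using hsum
      · intro j'
        have h0 := congrArg (fun v : EuclideanSpace ℝ (Fin r) => v j') hy
        simp only [hsum, zero_smul] at h0
        rw [euc_sum_apply] at h0
        simpa [PiLp.smul_apply, smul_eq_mul, mul_comm] using h0
    exact hinj (by rw [hMv, map_zero])
  ext z
  simp only [Set.mem_setOf_eq, Set.mem_singleton_iff]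
  constructor
  · intro hz
    have hzy : ∀ i, 2 * (inner ℝ (z - x) (y i) : ℝ) = ‖z‖ ^ 2 - ‖x‖ ^ 2 := by
      intro i
      have h1 : ‖z - y i‖ ^ 2 = ‖x - y i‖ ^ 2 := by rw [hz i, hx i]
      rw [norm_sub_sq_real, norm_sub_sq_real] at h1
      have : (inner ℝ (z - x) (y i) : ℝ) = inner ℝ z (y i) - inner ℝ x (y i) :=
        inner_sub_left z x (y i)
      rw [this]; linarith
    have hsum1 : 2 * (inner ℝ (z - x) ((∑ i, lam i) • x) : ℝ)
        = (∑ i, lam i) * (‖z‖ ^ 2 - ‖x‖ ^ 2) := by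
      rw [← hy, inner_sum, Finset.mul_sum, Finset.sum_mul]
      refine Finset.sum_congr rfl fun i _ => ?_
      rw [real_inner_smul_right, ← hzy i]; ring
    rw [real_inner_smul_right] at hsum1
    have hkey : 2 * (inner ℝ (z - x) x : ℝ) = ‖z‖ ^ 2 - ‖x‖ ^ 2 := by
      apply mul_left_cancel₀ hs
      linear_combination hsum1
    have hzx : ‖z - x‖ ^ 2 = 0 := by
      rw [norm_sub_sq_real]
      have : (inner ℝ (z - x) x : ℝ) = inner ℝ z x - inner ℝ x x := inner_sub_left z x x
      rw [this] at hkey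
      have hxx : (inner ℝ x x : ℝ) = ‖x‖ ^ 2 := real_inner_self_eq_norm_sq x
      rw [hxx] at hkey
      linarith [hkey]
    have : z - x = 0 := by
      have := pow_eq_zero_iff (n := 2) (by norm_num) |>.mp hzx
      exact norm_eq_zero.mp this
    exact sub_eq_zero.mp this
  · intro h; subst h; exact hx
end

section
/- Let $y_1, \dots, y_k \in \mathbb{R}^r$, let $R \in \mathbb{R}^{k \times r}$ have rows $y_i^\top$, and let $d \in \mathbb{R}^k_{\geq 0}$. If $\mathrm{rank}([e, R]) \leq k - 1$ (where $[e, R]$ is the $k \times (r+1)$ matrix obtained by prepending the all-ones column $e$ to $R$) and $\mathcal{B}_{R,d} := \{x \in \mathbb{R}^r : \|x - y_i\|^2 = d_i^2, \forall i\}$ is nonempty, then there exists a proper subset $\mathcal{I} \subsetneq [k]$ such that $\mathcal{B}_{R,d} = \mathcal{B}_{R_{\mathcal{I}}, d_{\mathcal{I}}}$, where $R_{\mathcal{I}}$ and $d_{\mathcal{I}}$ denote the restrictions of $R$ and $d$ to the rows and entries indexed by $\mathcal{I}$. -/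
theorem stmt_4 {k r : ℕ} (y : Fin k → EuclideanSpace ℝ (Fin r)) (d : Fin k → ℝ)
    (hd : ∀ i, 0 ≤ d i)
    (M : Matrix (Fin k) (Fin (r + 1)) ℝ)
    (hM : M = Matrix.of fun i j => Fin.cons (1 : ℝ) (fun j' => y i j') j)
    (hrank : M.rank < k)
    (hne : ({x : EuclideanSpace ℝ (Fin r) | ∀ i, ‖x - y i‖ ^ 2 = d i ^ 2}).Nonempty) :
    ∃ I : Finset (Fin k), I ⊂ Finset.univ ∧
      {x : EuclideanSpace ℝ (Fin r) | ∀ i, ‖x - y i‖ ^ 2 = d i ^ 2} =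
      {x : EuclideanSpace ℝ (Fin r) | ∀ i ∈ I, ‖x - y i‖ ^ 2 = d i ^ 2} := by
  -- rows of M are linearly dependent
  have hnotinj : ¬ Function.Injective (Matrix.mulVecLin M.transpose) := by
    intro hinj
    have h1 : M.transpose.rank = k := by
      have := LinearMap.finrank_range_of_inj hinj
      simpa [Matrix.rank, Module.finrank_fintype_fun_eq_card] using this
    rw [Matrix.rank_transpose] at h1
    omega
  rw [← LinearMap.ker_eq_bot] at hnotinj
  obtain ⟨c, hcker, hc0⟩ := Submodule.exists_mem_ne_zero_of_ne_bot hnotinj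
  have hker : M.transpose.mulVec c = 0 := hcker
  have h0 : ∑ i, c i = 0 := by
    have := congrFun hker 0
    simpa [Matrix.mulVec, Matrix.transpose, dotProduct, hM, mul_comm] using this
  have hjj : ∀ j' : Fin r, ∑ i, c i * y i j' = 0 := by
    intro j'
    have := congrFun hker j'.succ
    simpa [Matrix.mulVec, Matrix.transpose, dotProduct, hM, mul_comm] using this
  have hyv : ∑ i, c i • y i = (0 : EuclideanSpace ℝ (Fin r)) := by
    ext j'
    rw [show ((∑ i, c i • y i) j') = ∑ i, c i * y i j' from by
      induction (Finset.univ : Finset (Fin k)) using Finset.cons_induction with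
      | empty => rfl
      | cons a s ha ih => rw [Finset.sum_cons, Finset.sum_cons, ← ih]; rfl]
    exact hjj j'
  -- the weighted sum is constant in x
  have key : ∀ x : EuclideanSpace ℝ (Fin r),
      ∑ i, c i * ‖x - y i‖ ^ 2 = ∑ i, c i * ‖y i‖ ^ 2 := by
    intro x
    have hx : ∀ i, ‖x - y i‖ ^ 2
        = ‖x‖ ^ 2 - 2 * (inner ℝ x (y i) : ℝ) + ‖y i‖ ^ 2 := fun i => norm_sub_sq_real x (y i)
    have hinner : ∑ i, c i * (inner ℝ x (y i) : ℝ) = 0 := by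
      have h1 : (inner ℝ x (∑ i, c i • y i) : ℝ) = 0 := by rw [hyv, inner_zero_right]
      rw [inner_sum] at h1
      simp_rw [real_inner_smul_right] at h1
      exact h1
    calc ∑ i, c i * ‖x - y i‖ ^ 2
        = ∑ i, (c i * ‖x‖ ^ 2 - 2 * (c i * (inner ℝ x (y i) : ℝ)) + c i * ‖y i‖ ^ 2) := by
          refine Finset.sum_congr rfl fun i _ => ?_
          rw [hx i]; ring
      _ = (∑ i, c i) * ‖x‖ ^ 2 - 2 * (∑ i, c i * (inner ℝ x (y i) : ℝ)) + ∑ i, c i * ‖y i‖ ^ 2 := by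
          rw [Finset.sum_add_distrib, Finset.sum_sub_distrib, ← Finset.sum_mul,
            ← Finset.mul_sum]
      _ = ∑ i, c i * ‖y i‖ ^ 2 := by rw [h0, hinner]; ring
  obtain ⟨x₀, hx₀⟩ := hne
  have hconst : ∑ i, c i * d i ^ 2 = ∑ i, c i * ‖y i‖ ^ 2 := by
    rw [← key x₀]
    exact Finset.sum_congr rfl fun i _ => by rw [hx₀ i]
  obtain ⟨i₀, hi₀⟩ : ∃ i, c i ≠ 0 := by
    by_contra h
    push_neg at h
    exact hc0 (funext h)
  refine ⟨Finset.univ.erase i₀, Finset.erase_ssubset (Finset.mem_univ i₀), ?_⟩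
  ext x
  simp only [Set.mem_setOf_eq]
  constructor
  · intro h i _; exact h i
  · intro h i
    rcases eq_or_ne i i₀ with rfl | hne'
    · -- derive the i₀ constraint
      have e1 := Finset.add_sum_erase Finset.univ (fun j => c j * ‖x - y j‖ ^ 2)
        (Finset.mem_univ i)
      have e2 := Finset.add_sum_erase Finset.univ (fun j => c j * d j ^ 2)
        (Finset.mem_univ i)
      have hrest : ∑ j ∈ Finset.univ.erase i, c j * ‖x - y j‖ ^ 2
          = ∑ j ∈ Finset.univ.erase i, c j * d j ^ 2 :=
        Finset.sum_congr rfl fun j hj => by rw [h j hj]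
      have : c i * ‖x - y i‖ ^ 2 = c i * d i ^ 2 := by
        linarith [key x, hconst, e1, e2, hrest]
      exact mul_left_cancel₀ hi₀ this
    · exact h i (Finset.mem_erase.mpr ⟨hne', Finset.mem_univ i⟩)
end

section
/- Let $f_0 \geq f^*$ be reals, $A, B > 0$, and $(g_k)_{k\geq 0}$ a sequence of nonnegative reals. Suppose there is a sequence $(F_k)$ with $F_0 = f_0$, $F_k \geq f^*$, and $F_k - F_{k+1} \geq \min\{A g_k^2, B g_k\}$ for all $k$. Then for every $N \geq 1$, $\min_{0 \leq k \leq N-1} g_k \leq \max\left\{\sqrt{\frac{f_0 - f^*}{A N}}, \frac{f_0 - f^*}{B N}\right\}$; in particular $\min_{0 \leq k \leq N-1} g_k = \mathcal{O}(1/\sqrt{N})$. -/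
/-!
Summing the decrease condition over the first `N` steps telescopes to
`∑_{k<N} min (A g_k², B g_k) ≤ f₀ - f*`, so the smallest summand, attained at some `k < N`, is at most
`(f₀ - f*) / N`. Whichever branch realizes that minimum then bounds `g_k` by the corresponding term of the
maximum.
-/

open Finset

theorem sum_range_le_sub_of_le_sub_succ {F d : ℕ → ℝ} (h : ∀ k, d k ≤ F k - F (k + 1)) (N : ℕ) :
    ∑ k ∈ range N, d k ≤ F 0 - F N :=
  (sum_le_sum fun k _ ↦ h k).trans_eq (sum_range_sub' F N)

theorem exists_lt_nsmul_le_sum_range {d : ℕ → ℝ} {N : ℕ} (hN : N ≠ 0) :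
    ∃ k < N, N • d k ≤ ∑ i ∈ range N, d i := by
  obtain ⟨k, hk, hmin⟩ := exists_min_image (range N) d (nonempty_range_iff.mpr hN)
  refine ⟨k, mem_range.mp hk, ?_⟩
  simpa using card_nsmul_le_sum (range N) d (d k) hmin

theorem le_max_sqrt_div_of_mul_min_le {A B c D m : ℝ} (hA : 0 < A) (hB : 0 < B) (hc : 0 < c)
    (h : c * min (A * m ^ 2) (B * m) ≤ D) :
    m ≤ max (Real.sqrt (D / (A * c))) (D / (B * c)) := by
  rcases le_total (A * m ^ 2) (B * m) with hle | hle
  · rw [min_eq_left hle] at h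
    refine le_max_of_le_left (Real.le_sqrt_of_sq_le ?_)
    rw [le_div_iff₀ (by positivity)]
    linarith
  · rw [min_eq_right hle] at h
    refine le_max_of_le_right ?_
    rw [le_div_iff₀ (by positivity)]
    linarith

theorem stmt_9_general (f0 fstar : ℝ) (A B : ℝ) (hA : 0 < A) (hB : 0 < B)
    (g : ℕ → ℝ)
    (F : ℕ → ℝ) (hF0 : F 0 = f0) (hFlb : ∀ k, F k ≥ fstar)
    (hdec : ∀ k, F k - F (k + 1) ≥ min (A * g k ^ 2) (B * g k)) :
    ∀ N : ℕ, 1 ≤ N → ∃ k, k ≤ N - 1 ∧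
      g k ≤ max (Real.sqrt ((f0 - fstar) / (A * N))) ((f0 - fstar) / (B * N)) := by
  intro N hN
  obtain ⟨k, hkN, hk⟩ := exists_lt_nsmul_le_sum_range
    (d := fun k ↦ min (A * g k ^ 2) (B * g k)) (Nat.one_le_iff_ne_zero.mp hN)
  have htotal : ∑ i ∈ range N, min (A * g i ^ 2) (B * g i) ≤ f0 - fstar := by
    linarith [sum_range_le_sub_of_le_sub_succ hdec N, hFlb N]
  refine ⟨k, by omega, le_max_sqrt_div_of_mul_min_le hA hB (by positivity) ?_⟩
  rw [nsmul_eq_mul] at hk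
  linarith

theorem stmt_9 (f0 fstar : ℝ) (hf : f0 ≥ fstar) (A B : ℝ) (hA : 0 < A) (hB : 0 < B)
    (g : ℕ → ℝ) (hg : ∀ k, 0 ≤ g k)
    (F : ℕ → ℝ) (hF0 : F 0 = f0) (hFlb : ∀ k, F k ≥ fstar)
    (hdec : ∀ k, F k - F (k + 1) ≥ min (A * g k ^ 2) (B * g k)) :
    ∀ N : ℕ, 1 ≤ N → ∃ k, k ≤ N - 1 ∧
      g k ≤ max (Real.sqrt ((f0 - fstar) / (A * N))) ((f0 - fstar) / (B * N)) :=
  stmt_9_general f0 fstar A B hA hB g F hF0 hFlb hdec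
end

section
/- Let $M, \gamma > 0$ and $g \geq 0$. Then $\inf_{\eta \geq 0}\left( -\eta g^2 + \frac{M\eta^2}{2} g^2 + \frac{\eta^3 \gamma}{6} g^3 \right) \leq -\min\left\{ \frac{g^2}{4M}, \frac{3M g}{2\gamma} \right\}$. -/
theorem stmt_10 (M γ g : ℝ) (hM : 0 < M) (hγ : 0 < γ) (hg : 0 ≤ g) :
    sInf ((fun η : ℝ => -η * g ^ 2 + M * η ^ 2 / 2 * g ^ 2 + η ^ 3 * γ / 6 * g ^ 3) ''
        {η : ℝ | 0 ≤ η}) ≤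
      -min (g ^ 2 / (4 * M)) (3 * M * g / (2 * γ)) := by
  set f : ℝ → ℝ := fun η : ℝ => -η * g ^ 2 + M * η ^ 2 / 2 * g ^ 2 + η ^ 3 * γ / 6 * g ^ 3
    with hf
  have hbdd : BddBelow (f '' {η : ℝ | 0 ≤ η}) := by
    refine ⟨-g ^ 2 / (2 * M), ?_⟩
    rintro x ⟨η, hη, rfl⟩
    simp only [Set.mem_setOf_eq] at hη
    have hcube : 0 ≤ η ^ 3 * γ / 6 * g ^ 3 := by positivity
    have hsq : 0 ≤ g ^ 2 * (M / 2) * (η - 1 / M) ^ 2 := by positivity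
    simp only [hf]
    rw [div_le_iff₀ (by positivity : (0:ℝ) < 2 * M)]
    nlinarith [mul_nonneg (sq_nonneg g) (sq_nonneg (M * η - 1)),
      mul_nonneg hcube hM.le]
  rcases hg.eq_or_lt with hg0 | hg0
  · have h0 : f 0 ≤ -min (g ^ 2 / (4 * M)) (3 * M * g / (2 * γ)) := by
      simp [hf, ← hg0]
    exact le_trans (csInf_le hbdd ⟨0, Set.mem_setOf.mpr le_rfl, rfl⟩) h0
  · set a : ℝ := 1 / (2 * M) with ha
    set b : ℝ := 3 * M / (γ * g) with hb
    have ha0 : 0 < a := by positivity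
    have hb0 : 0 < b := by positivity
    have hgγ : 0 < γ * g := by positivity
    rcases le_total a b with hab | hab
    · -- η₀ = a, show f a ≤ -g²/(4M)
      have hkey : γ * g ≤ 6 * M ^ 2 := by
        rw [ha, hb, div_le_div_iff₀ (by positivity) hgγ] at hab
        nlinarith
      have hfa : f a ≤ -(g ^ 2 / (4 * M)) := by
        simp only [hf, ha]
        have hM' : M ≠ 0 := ne_of_gt hM
        field_simp
        nlinarith [sq_nonneg g, sq_nonneg M, mul_pos hM hM, sq_nonneg (g*M),
          mul_nonneg (mul_nonneg hg hg) hg, pow_pos hM 3, pow_pos hg0 2,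
          mul_le_mul_of_nonneg_left hkey (by positivity : (0:ℝ) ≤ g ^ 2 * M)]
      refine le_trans (csInf_le hbdd ⟨a, ha0.le, rfl⟩) (hfa.trans ?_)
      exact neg_le_neg (min_le_left _ _)
    · -- η₀ = b, show f b ≤ -3Mg/(2γ)
      have hkey : 6 * M ^ 2 ≤ γ * g := by
        rw [ha, hb, div_le_div_iff₀ hgγ (by positivity)] at hab
        nlinarith
      have hfb : f b ≤ -(3 * M * g / (2 * γ)) := by
        have hγ' : γ ≠ 0 := ne_of_gt hγ
        have hg' : g ≠ 0 := ne_of_gt hg0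
        have hval : f b = (9 * M ^ 3 - 3 * M * γ * g) / γ ^ 2 := by
          simp only [hf, hb]
          field_simp
          ring
        rw [hval, ← neg_div, div_le_div_iff₀ (by positivity) (by positivity : (0:ℝ) < 2 * γ)]
        nlinarith [mul_le_mul_of_nonneg_left hkey (by positivity : (0:ℝ) ≤ 3 * M * γ)]
      refine le_trans (csInf_le hbdd ⟨b, hb0.le, rfl⟩) (hfb.trans ?_)
      exact neg_le_neg (min_le_right _ _)
end
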